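/- arXiv:1506.02255 — 4 statements merged into one kernel-verified Lean document; each statement's English description precedes it below -/
import Mathlib

section
/- Entropy of line families (Lemma 1): Let Λ ⊂ ℤ² be finite with horizontal boundary condition and let (S_i)_{i=1}^n with n ≥ 1 be regions of 𝒮_Λ at pairwise ℤ²-distance > 1. Then Σ_{p≥0} (1/p!) · #{ (L_k)_{k=1}^p ∈ 𝒫ℒ_Λ(∪_i S_i) } ≤ 4^{Σ_{i=1}^n |S_i|}. -/
/-!
Put `V = ⋃ i, S i`. In `ℤ̃²` a site of a line has only horizontal bonds, so a line of a family in
`𝒫ℒ_Λ(V)` that contained no horizontal neighbour of `V` would be closed under the bonds of the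
connected graph on `V ∪ ⋃ k, L k`, hence would contain `V`, which it avoids. Two maximal lines sharing
a site coincide, so at most `N ≤ 2|V|` lines can occur, and the families of `p` distinct lines number
at most `N(N-1)⋯(N-p+1) = p! · C(N, p)`. The sum is therefore at most `∑ₚ C(N, p) = 2^N ≤ 4^|V|`.
-/

open scoped BigOperators Classical

noncomputable section

abbrev Site : Type := ℤ × ℤ

/-! ## Connectivity in the lattice `ℤ²` -/

/-- The nearest-neighbour graph on `ℤ²`. -/
def gridGraph : SimpleGraph Site where
  Adj x y := |x.1 - y.1| + |x.2 - y.2| = 1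
  symm := by
    constructor
    intro x y h
    rw [abs_sub_comm y.1 x.1, abs_sub_comm y.2 x.2]
    exact h
  loopless := by constructor; intro x h; simp at h

/-- `S` is connected as a subgraph of `ℤ²`. -/
def ConnectedIn (S : Finset Site) : Prop :=
  (SimpleGraph.induce (↑S : Set Site) gridGraph).Connected

/-- The maximal vertical segment of `S` through `x`. -/
def vSegment (S : Finset Site) (x : Site) : Finset Site :=
  S.filter fun y => y.1 = x.1 ∧
    ∀ t : ℤ, min x.2 y.2 ≤ t → t ≤ max x.2 y.2 → ((x.1, t) : Site) ∈ S

/-- `𝒮_Λ`: the regions of vertical dimers. `S` is a nonempty connected subset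
of `Λ`, every maximal vertical segment of `S` has an even number of sites, and
`S` avoids the set `F` of sites forced by the boundary condition to carry a
horizontal dimer. -/
def IsRegion (Λ F : Finset Site) (S : Finset Site) : Prop :=
  S ⊆ Λ ∧ S.Nonempty ∧ ConnectedIn S ∧
    (∀ x ∈ S, Even (vSegment S x).card) ∧ ∀ x ∈ S, x ∉ F

/-- `𝒫𝒮_Λ`: finite families of regions of `𝒮_Λ` at pairwise `ℤ²`-distance
`> 1`. -/
def PSfam (Λ F : Finset Site) {n : ℕ} (S : Fin n → Finset Site) : Prop :=
  (∀ i, IsRegion Λ F (S i)) ∧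
    ∀ i j : Fin n, i ≠ j → ∀ x ∈ S i, ∀ y ∈ S j,
      1 < (x.1 - y.1).natAbs + (x.2 - y.2).natAbs

/-- `L` is a maximal horizontal line of `A`. -/
def maxHLine (A : Finset Site) (L : Finset Site) : Prop :=
  ∃ yy ll rr : ℤ, ll ≤ rr ∧
    L = (Finset.Icc ll rr).image (fun t => ((t, yy) : Site)) ∧
    (∀ t ∈ Finset.Icc ll rr, ((t, yy) : Site) ∈ A) ∧
    ((ll - 1, yy) : Site) ∉ A ∧ ((rr + 1, yy) : Site) ∉ A

/-- The lattice `ℤ̃²`: `ℤ²` with all the vertical bonds incident to the set `W`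
(the union of the lines) removed. -/
def tildeGraph (W : Set Site) : SimpleGraph Site where
  Adj x y := (|x.1 - y.1| + |x.2 - y.2| = 1) ∧ (x.1 = y.1 → x ∉ W ∧ y ∉ W)
  symm := by
    constructor
    intro x y h
    constructor
    · rw [abs_sub_comm y.1 x.1, abs_sub_comm y.2 x.2]
      exact h.1
    · intro hyx
      exact ⟨(h.2 hyx.symm).2, (h.2 hyx.symm).1⟩
  loopless := by constructor; intro x h; simp at h

/-- `𝒫ℒ_Λ(V)`: families of pairwise distinct maximal horizontal lines of
`Λ∖V` such that `V` together with the lines is connected in `ℤ̃²`. -/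
def PLfam (Λ V : Finset Site) {p : ℕ} (L : Fin p → Finset Site) : Prop :=
  (∀ k, maxHLine (Λ \ V) (L k)) ∧
  (∀ k k' : Fin p, k ≠ k' → L k ≠ L k') ∧
  (SimpleGraph.induce ((↑V : Set Site) ∪ ⋃ k, (↑(L k) : Set Site))
      (tildeGraph (⋃ k, (↑(L k) : Set Site)))).Connected

open Function SimpleGraph

theorem Int.eq_of_maximal_Icc_of_mem {P : ℤ → Prop} {l r l' r' t : ℤ}
    (hP : ∀ s ∈ Finset.Icc l r, P s) (hl : ¬P (l - 1)) (hr : ¬P (r + 1))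
    (hP' : ∀ s ∈ Finset.Icc l' r', P s) (hl' : ¬P (l' - 1)) (hr' : ¬P (r' + 1))
    (ht : t ∈ Finset.Icc l r) (ht' : t ∈ Finset.Icc l' r') : l = l' ∧ r = r' := by
  simp only [Finset.mem_Icc] at ht ht'
  constructor <;> by_contra hne <;> rcases lt_or_gt_of_ne hne with h | h
  · exact hl' (hP _ (Finset.mem_Icc.2 ⟨by omega, by omega⟩))
  · exact hl (hP' _ (Finset.mem_Icc.2 ⟨by omega, by omega⟩))
  · exact hr (hP' _ (Finset.mem_Icc.2 ⟨by omega, by omega⟩))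
  · exact hr' (hP _ (Finset.mem_Icc.2 ⟨by omega, by omega⟩))

theorem SimpleGraph.Preconnected.mem_of_adj_closed {V : Type*} {G : SimpleGraph V}
    (hG : G.Preconnected) {T : Set V} (hT : ∀ a b, G.Adj a b → a ∈ T → b ∈ T) {a b : V}
    (ha : a ∈ T) : b ∈ T := by
  obtain ⟨w⟩ := hG a b
  induction w with
  | nil => exact ha
  | cons hadj _ ih => exact ih (hT _ _ hadj ha)

theorem Set.finite_of_subsingleton_fibers {α β : Type*} {R : α → β → Prop} (T : Finset β)
    (hR : ∀ b ∈ T, {a | R a b}.Subsingleton) : {a | ∃ b ∈ T, R a b}.Finite := by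
  convert T.finite_toSet.biUnion fun b hb => (hR b hb).finite using 1
  ext; simp

theorem Set.ncard_le_card_of_subsingleton_fibers {α β : Type*} {R : α → β → Prop} (T : Finset β)
    (hR : ∀ b ∈ T, {a | R a b}.Subsingleton) : {a | ∃ b ∈ T, R a b}.ncard ≤ T.card := by
  have hunion : {a | ∃ b ∈ T, R a b} = ⋃ b ∈ T, {a | R a b} := by ext; simp
  calc {a | ∃ b ∈ T, R a b}.ncard ≤ ∑ b ∈ T, {a | R a b}.ncard := hunion ▸ T.set_ncard_biUnion_le _
    _ ≤ ∑ _b ∈ T, 1 := Finset.sum_le_sum fun b hb => (Set.ncard_le_one (hR b hb).finite).2 (hR b hb)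
    _ = T.card := by simp

section InjectiveFamilies

variable {α : Type*} {G : Finset α} {p : ℕ} {s : Set (Fin p → α)}

theorem Set.subset_range_embedding (hs : ∀ L ∈ s, Injective L ∧ ∀ k, L k ∈ G) :
    s ⊆ Set.range fun e : Fin p ↪ G => Subtype.val ∘ e := fun L hL =>
  ⟨⟨fun k => ⟨L k, (hs L hL).2 k⟩, fun _ _ h => (hs L hL).1 (congrArg Subtype.val h)⟩, rfl⟩

theorem Set.finite_of_injective_mem (hs : ∀ L ∈ s, Injective L ∧ ∀ k, L k ∈ G) : s.Finite :=
  (Set.finite_range _).subset (Set.subset_range_embedding hs)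

theorem Set.ncard_le_descFactorial (hs : ∀ L ∈ s, Injective L ∧ ∀ k, L k ∈ G) :
    s.ncard ≤ G.card.descFactorial p := by
  have hinj : Injective fun e : Fin p ↪ G => Subtype.val ∘ e := fun e e' h =>
    DFunLike.ext _ _ fun k => Subtype.ext (congrFun h k)
  calc s.ncard ≤ (Set.range fun e : Fin p ↪ G => Subtype.val ∘ e).ncard :=
        Set.ncard_le_ncard (Set.subset_range_embedding hs) (Set.finite_range _)
    _ = G.card.descFactorial p := by
      rw [Set.ncard_range_of_injective hinj, Nat.card_eq_fintype_card, Fintype.card_embedding_eq,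
        Fintype.card_fin, Fintype.card_coe]

end InjectiveFamilies

theorem tsum_inv_factorial_mul_le_two_pow {a : ℕ → ℝ} {N : ℕ} (ha0 : ∀ p, 0 ≤ a p)
    (ha : ∀ p, a p ≤ N.descFactorial p) : ∑' p, ((p.factorial : ℝ))⁻¹ * a p ≤ 2 ^ N := by
  have hchoose_zero : ∀ p ∉ Finset.range (N + 1), (N.choose p : ℝ) = 0 := fun p hp => by
    rw [Finset.mem_range, not_lt] at hp
    exact_mod_cast Nat.choose_eq_zero_of_lt hp
  have hchoose : Summable fun p => (N.choose p : ℝ) := summable_of_ne_finset_zero hchoose_zero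
  have hterm : ∀ p, ((p.factorial : ℝ))⁻¹ * a p ≤ N.choose p := fun p => by
    rw [inv_mul_le_iff₀ (by positivity)]
    exact_mod_cast (ha p).trans_eq (by exact_mod_cast Nat.descFactorial_eq_factorial_mul_choose N p)
  calc ∑' p, ((p.factorial : ℝ))⁻¹ * a p ≤ ∑' p, (N.choose p : ℝ) :=
        (hchoose.of_nonneg_of_le (fun p => by have := ha0 p; positivity) hterm).tsum_le_tsum
          hterm hchoose
    _ = 2 ^ N := by
      rw [tsum_eq_sum hchoose_zero]
      exact_mod_cast Nat.sum_range_choose N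

lemma mem_image_Icc_row_iff {y l r : ℤ} {x : Site} :
    x ∈ (Finset.Icc l r).image (fun t => ((t, y) : Site)) ↔ x.2 = y ∧ x.1 ∈ Finset.Icc l r := by
  obtain ⟨a, b⟩ := x
  simp [and_comm, eq_comm]

namespace maxHLine

variable {A L : Finset Site}

theorem subset (h : maxHLine A L) : L ⊆ A := by
  obtain ⟨y, l, r, -, rfl, hA, -⟩ := h
  intro x hx
  obtain ⟨t, ht, rfl⟩ := Finset.mem_image.1 hx
  exact hA t ht

theorem nonempty (h : maxHLine A L) : L.Nonempty := by
  obtain ⟨y, l, r, hlr, rfl, -⟩ := h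
  simpa using hlr

theorem eq_of_mem {L' : Finset Site} (h : maxHLine A L) (h' : maxHLine A L') {x : Site}
    (hx : x ∈ L) (hx' : x ∈ L') : L = L' := by
  obtain ⟨y, l, r, -, rfl, hA, hl, hr⟩ := h
  obtain ⟨y', l', r', -, rfl, hA', hl', hr'⟩ := h'
  rw [mem_image_Icc_row_iff] at hx hx'
  obtain rfl : y = y' := hx.1.symm.trans hx'.1
  obtain ⟨rfl, rfl⟩ := Int.eq_of_maximal_Icc_of_mem (P := fun t => ((t, y) : Site) ∈ A)
    hA hl hr hA' hl' hr' hx.2 hx'.2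
  rfl

theorem mem_of_adj (h : maxHLine A L) {a b : Site} (ha : a ∈ L) (hb : b ∈ A)
    (hab : b = a + (1, 0) ∨ b = a - (1, 0)) : b ∈ L := by
  obtain ⟨y, l, r, -, rfl, -, hl, hr⟩ := h
  rw [mem_image_Icc_row_iff, Finset.mem_Icc] at ha ⊢
  obtain ⟨b1, b2⟩ := b
  have hcol : b1 = a.1 + 1 ∨ b1 = a.1 - 1 := by rcases hab with h | h <;> simp [Prod.ext_iff] at h <;> omega
  have hrow : b2 = y := by rcases hab with h | h <;> simp [Prod.ext_iff] at h <;> omega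
  subst hrow
  refine ⟨rfl, ?_, ?_⟩ <;> by_contra hout
  · exact hl (by rwa [show l - 1 = b1 by omega])
  · exact hr (by rwa [show r + 1 = b1 by omega])

end maxHLine

theorem tildeGraph_adj_of_mem {W : Set Site} {x z : Site} (hx : x ∈ W)
    (h : (tildeGraph W).Adj x z) : z = x + (1, 0) ∨ z = x - (1, 0) := by
  obtain ⟨hdist, hvert⟩ := h
  have hcol : x.1 ≠ z.1 := fun he => (hvert he).1 hx
  simp only [Prod.ext_iff, Prod.fst_add, Prod.snd_add, Prod.fst_sub, Prod.snd_sub, add_zero, sub_zero]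
  rcases abs_cases (x.1 - z.1) with h1 | h1 <;> rcases abs_cases (x.2 - z.2) with h2 | h2 <;> omega

def horizontalNbrs (V : Finset Site) : Finset Site :=
  V.image (· + (1, 0)) ∪ V.image (· - (1, 0))

theorem card_horizontalNbrs_le (V : Finset Site) : (horizontalNbrs V).card ≤ 2 * V.card :=
  (Finset.card_union_le _ _).trans (by
    have := V.card_image_le (f := (· + ((1, 0) : Site)))
    have := V.card_image_le (f := (· - ((1, 0) : Site)))
    omega)

theorem mem_horizontalNbrs {V : Finset Site} {a b : Site} (hb : b ∈ V)
    (hab : b = a + (1, 0) ∨ b = a - (1, 0)) : a ∈ horizontalNbrs V := by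
  rcases hab with rfl | rfl
  · exact Finset.mem_union_right _ (Finset.mem_image.2 ⟨_, hb, add_sub_cancel_right a _⟩)
  · exact Finset.mem_union_left _ (Finset.mem_image.2 ⟨_, hb, sub_add_cancel a _⟩)

theorem PLfam.exists_mem_horizontalNbrs {Λ V : Finset Site} (hV : V.Nonempty) {p : ℕ}
    {L : Fin p → Finset Site} (hL : PLfam Λ V L) (k : Fin p) :
    ∃ x ∈ L k, x ∈ horizontalNbrs V := by
  obtain ⟨hlines, -, hconn⟩ := hL
  by_contra! hfar
  set W : Set Site := ⋃ k, (↑(L k) : Set Site)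
  have hclosed : ∀ a b, (induce (↑V ∪ W) (tildeGraph W)).Adj a b →
      a ∈ {u | u.1 ∈ L k} → b ∈ {u | u.1 ∈ L k} := by
    intro a b hab ha
    have hstep := tildeGraph_adj_of_mem (Set.mem_iUnion.2 ⟨k, ha⟩) hab
    rcases b.2 with hbV | hbW
    · exact absurd (mem_horizontalNbrs hbV hstep) (hfar _ ha)
    · obtain ⟨k', hk'⟩ := Set.mem_iUnion.1 hbW
      exact (hlines k).mem_of_adj ha ((hlines k').subset hk') hstep
  obtain ⟨v, hv⟩ := hV
  obtain ⟨x, hx⟩ := (hlines k).nonempty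
  have hvL : v ∈ L k := hconn.preconnected.mem_of_adj_closed hclosed
    (a := ⟨x, Or.inr (Set.mem_iUnion.2 ⟨k, hx⟩)⟩) (b := ⟨v, Or.inl hv⟩) hx
  exact (Finset.mem_sdiff.1 ((hlines k).subset hvL)).2 hv

theorem finite_setOf_maxHLine_meeting (A N : Finset Site) :
    {L | ∃ x ∈ N, maxHLine A L ∧ x ∈ L}.Finite :=
  Set.finite_of_subsingleton_fibers N fun _ _ _ hL _ hL' => hL.1.eq_of_mem hL'.1 hL.2 hL'.2

theorem ncard_setOf_maxHLine_meeting_le (A N : Finset Site) :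
    {L | ∃ x ∈ N, maxHLine A L ∧ x ∈ L}.ncard ≤ N.card :=
  Set.ncard_le_card_of_subsingleton_fibers N fun _ _ _ hL _ hL' => hL.1.eq_of_mem hL'.1 hL.2 hL'.2

/-- **Lemma 1 (entropy of line families).** Let `Λ ⊂ ℤ²` be finite with
horizontal boundary condition (whose forced sites are `F`) and let
`(S_i)_{i=1}^n`, `n ≥ 1`, be a family of regions of `𝒮_Λ` at pairwise
distance `> 1`. Then `Σ_{p≥0} (1/p!)·#𝒫ℒ_Λ^{(p)}(∪_i S_i) ≤ 4^{Σ_i |S_i|}`. -/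
theorem entropy_of_line_families (Λ F : Finset Site) (n : ℕ) (hn : 1 ≤ n)
    (S : Fin n → Finset Site) (hS : PSfam Λ F S) :
    (∀ p : ℕ,
      {L : Fin p → Finset Site | PLfam Λ (Finset.univ.biUnion S) L}.Finite) ∧
    ∑' p : ℕ, ((p.factorial : ℝ))⁻¹ *
        ({L : Fin p → Finset Site |
            PLfam Λ (Finset.univ.biUnion S) L}.ncard : ℝ) ≤
      4 ^ (∑ i, (S i).card) := by
  set V := Finset.univ.biUnion S
  have hV : V.Nonempty :=
    (hS.1 ⟨0, hn⟩).2.1.mono (Finset.subset_biUnion_of_mem S (Finset.mem_univ _))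
  set G := (finite_setOf_maxHLine_meeting (Λ \ V) (horizontalNbrs V)).toFinset
  have hfam : ∀ p, ∀ L ∈ {L : Fin p → Finset Site | PLfam Λ V L},
      Injective L ∧ ∀ k, L k ∈ G := fun p L hL =>
    ⟨fun _ _ h => by_contra fun hne => hL.2.1 _ _ hne h, fun k => by
      obtain ⟨x, hxL, hxN⟩ := hL.exists_mem_horizontalNbrs hV k
      exact (Set.Finite.mem_toFinset _).2 ⟨x, hxN, hL.1 k, hxL⟩⟩
  have hG : G.card ≤ 2 * ∑ i, (S i).card := calc
    G.card ≤ (horizontalNbrs V).card := by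
      rw [← Set.ncard_eq_toFinset_card _ (finite_setOf_maxHLine_meeting _ _)]; exact ncard_setOf_maxHLine_meeting_le _ _
    _ ≤ 2 * ∑ i, (S i).card := (card_horizontalNbrs_le V).trans (by gcongr; exact Finset.card_biUnion_le)
  refine ⟨fun p => Set.finite_of_injective_mem (hfam p), ?_⟩
  calc _ ≤ (2 : ℝ) ^ G.card := tsum_inv_factorial_mul_le_two_pow (fun _ => by positivity)
          fun p => by exact_mod_cast Set.ncard_le_descFactorial (hfam p)
    _ ≤ 2 ^ (2 * ∑ i, (S i).card) := pow_le_pow_right₀ one_le_two hG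
    _ = 4 ^ ∑ i, (S i).card := by rw [pow_mul]; norm_num
end
end

section
/- Tree-indexed entropy bound for families of regions (Lemma 4): Let n ≥ 1, let 𝒯 be a tree on the vertices {1,…,n}, let s_i ≥ 2 for each i and d_{ij} ≥ 2 for each edge (i,j) ∈ 𝒯. Then: (a) for every finite A ⊂ ℤ² and every 1 ≤ d < ∞, the number of families (S_i)_{i=1}^n ∈ 𝒫𝒮_Λ with dist_h(S_1,A) = d, |S_i| = s_i for all i, and dist_h(S_i,S_j) = d_{ij} for all (i,j) ∈ 𝒯, is at most |A| · ∏_{i=1}^n (32/3)·4^{4s_i}·s_i^{deg_𝒯(i)}; and (b) for every x ∈ ℤ², the number of families (S_i)_{i=1}^n ∈ 𝒫𝒮_Λ with S_1 ∋ x, |S_i| = s_i for all i, and dist_h(S_i,S_j) = d_{ij} for all (i,j) ∈ 𝒯, is at most ∏_{i=1}^n (32/3)·4^{4s_i}·s_i^{deg_𝒯(i)}. -/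
open scoped BigOperators Classical

noncomputable section

/-- `dist_h(S,A) = d`: the horizontal distance between `S` and `A`
(`dist_h(x,y) = |x_h − y_h|` if `x_v = y_v`, `+∞` otherwise, minimised over
pairs) equals `d`. -/
def hDistEq (S A : Finset Site) (d : ℕ) : Prop :=
  (∃ x ∈ S, ∃ y ∈ A, x.2 = y.2 ∧ (x.1 - y.1).natAbs = d) ∧
  (∀ x ∈ S, ∀ y ∈ A, x.2 = y.2 → d ≤ (x.1 - y.1).natAbs)

/-!
A family is encoded region by region. Orient `𝒯` towards the root `1`; the anchor of `S_1` is `A`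
and that of any other `S_i` is the region of its parent. Some site of `S_i` is a horizontal shift,
by the prescribed distance and to one of two sides, of a site of the anchor (`|A|`, resp.
`s_{p(i)}`, choices), and from that site a lattice walk of `2(s_i - 1)` unit moves sweeps out the
connected set `S_i` (`4^{2(s_i-1)}` choices). Decoding from the root outwards recovers the family,
and as a vertex is the parent of at most `deg_𝒯(i)` others, the number of codes is at most
`|A| · ∏ᵢ 2 · 4^{2(s_i-1)} · s_i^{deg_𝒯(i)}`.
-/

namespace Site

def move (x : Site) : Fin 4 → Site
  | 0 => (x.1 + 1, x.2)
  | 1 => (x.1 - 1, x.2)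
  | 2 => (x.1, x.2 + 1)
  | 3 => (x.1, x.2 - 1)

def visited (x : Site) (l : List (Fin 4)) : Finset Site :=
  (l.scanl move x).toFinset

@[simp]
lemma visited_nil (x : Site) : visited x [] = {x} := by
  simp [visited]

@[simp]
lemma visited_cons (x : Site) (d : Fin 4) (l : List (Fin 4)) :
    visited x (d :: l) = insert x (visited (move x d) l) := by
  simp [visited]

lemma mem_visited_self (x : Site) (l : List (Fin 4)) : x ∈ visited x l := by
  cases l <;> simp

lemma exists_move_move_of_adj {w v : Site} (h : gridGraph.Adj w v) :
    ∃ d d' : Fin 4, move w d = v ∧ move v d' = w := by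
  have h' : |w.1 - v.1| + |w.2 - v.2| = 1 := h
  have : (w.1 - v.1 = 1 ∧ w.2 = v.2) ∨ (w.1 - v.1 = -1 ∧ w.2 = v.2) ∨
      (w.1 = v.1 ∧ w.2 - v.2 = 1) ∨ (w.1 = v.1 ∧ w.2 - v.2 = -1) := by
    cases abs_cases (w.1 - v.1) <;> cases abs_cases (w.2 - v.2) <;> omega
  rcases this with ⟨h1, h2⟩ | ⟨h1, h2⟩ | ⟨h1, h2⟩ | ⟨h1, h2⟩
  · exact ⟨1, 0, Prod.ext (by simp [move]; omega) (by simp [move, h2]),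
      Prod.ext (by simp [move]; omega) (by simp [move, h2])⟩
  · exact ⟨0, 1, Prod.ext (by simp [move]; omega) (by simp [move, h2]),
      Prod.ext (by simp [move]; omega) (by simp [move, h2])⟩
  · exact ⟨3, 2, Prod.ext (by simp [move, h1]) (by simp [move]; omega),
      Prod.ext (by simp [move, h1]) (by simp [move]; omega)⟩
  · exact ⟨2, 3, Prod.ext (by simp [move, h1]) (by simp [move]; omega),
      Prod.ext (by simp [move, h1]) (by simp [move]; omega)⟩

/-- A walk reaching `w` is extended to a neighbour `v` of `w` by the detour `w → v → w`. -/
lemma exists_visited_eq_insert {w v : Site} (hwv : gridGraph.Adj w v) :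
    ∀ {x : Site} {l : List (Fin 4)}, w ∈ visited x l →
      ∃ l' : List (Fin 4), l'.length = l.length + 2 ∧ visited x l' = insert v (visited x l) := by
  obtain ⟨d, d', hd, hd'⟩ := exists_move_move_of_adj hwv
  intro x l hw
  induction l generalizing x with
  | nil =>
    obtain rfl : w = x := by simpa using hw
    exact ⟨[d, d'], rfl, by simp [hd, hd']⟩
  | cons e l ih =>
    rw [visited_cons, Finset.mem_insert] at hw
    rcases hw with rfl | hw
    · refine ⟨d :: d' :: e :: l, by simp, ?_⟩
      rw [visited_cons, visited_cons, hd, hd', Finset.insert_comm,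
        Finset.insert_eq_of_mem (mem_visited_self _ _)]
    · obtain ⟨l', hlen, hl'⟩ := ih hw
      exact ⟨e :: l', by simp [hlen], by rw [visited_cons, visited_cons, hl', Finset.insert_comm]⟩

end Site

lemma SimpleGraph.exists_adj_of_connected_induce {V : Type*} {G : SimpleGraph V} {S T : Set V}
    (hS : (G.induce S).Connected) {x y : V} (hxS : x ∈ S) (hxT : x ∈ T) (hyS : y ∈ S)
    (hyT : y ∉ T) : ∃ u ∈ T, ∃ v ∈ S, v ∉ T ∧ G.Adj u v := by
  obtain ⟨q⟩ := hS.preconnected ⟨x, hxS⟩ ⟨y, hyS⟩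
  obtain ⟨e, -, he1, he2⟩ := q.exists_boundary_dart {z | (z : V) ∈ T} hxT hyT
  exact ⟨e.fst, he1, e.snd, e.snd.2, he2, e.adj⟩

/-- Each new site, reached across an edge leaving the visited set, costs a detour of two moves. -/
lemma ConnectedIn.exists_visited_eq {S : Finset Site} (hS : ConnectedIn S) {x : Site}
    (hx : x ∈ S) : ∃ l : List (Fin 4), l.length = 2 * (S.card - 1) ∧ Site.visited x l = S := by
  have grow : ∀ k, k + 1 ≤ S.card → ∃ l : List (Fin 4),
      l.length = 2 * k ∧ Site.visited x l ⊆ S ∧ (Site.visited x l).card = k + 1 := by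
    intro k
    induction k with
    | zero => exact fun _ => ⟨[], rfl, by simpa using hx, by simp⟩
    | succ k ih =>
      intro hk
      obtain ⟨l, hlen, hsub, hcard⟩ := ih (by omega)
      obtain ⟨y, hyS, hyl⟩ := Finset.exists_mem_notMem_of_card_lt_card
        (s := Site.visited x l) (t := S) (by omega)
      obtain ⟨u, hu, v, hvS, hvl, huv⟩ := SimpleGraph.exists_adj_of_connected_induce hS
        (T := ↑(Site.visited x l)) (Finset.mem_coe.2 hx)
        (Finset.mem_coe.2 (Site.mem_visited_self x l)) (Finset.mem_coe.2 hyS) hyl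
      obtain ⟨l', hlen', hl'⟩ := Site.exists_visited_eq_insert huv hu
      refine ⟨l', by omega, hl' ▸ Finset.insert_subset hvS hsub, ?_⟩
      rw [hl', Finset.card_insert_of_notMem hvl, hcard]
  have hpos : 0 < S.card := Finset.card_pos.2 ⟨x, hx⟩
  obtain ⟨l, hlen, hsub, hcard⟩ := grow (S.card - 1) (by omega)
  exact ⟨l, hlen, Finset.eq_of_subset_of_card_le hsub (by omega)⟩

def hShift (y : Site) (σ : Bool) (d : ℕ) : Site :=
  (if σ then y.1 + d else y.1 - d, y.2)

lemma exists_hShift_eq {x y : Site} (h : x.2 = y.2) :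
    ∃ σ, hShift y σ (x.1 - y.1).natAbs = x := by
  rcases le_total 0 (x.1 - y.1) with hle | hle
  · exact ⟨true, Prod.ext (by simp [hShift, abs_of_nonneg hle]) h.symm⟩
  · exact ⟨false, Prod.ext (by simp [hShift, abs_of_nonpos hle]) h.symm⟩

namespace hDistEq

variable {S B : Finset Site} {d : ℕ}

lemma exists_hShift_mem_left (h : hDistEq S B d) : ∃ y ∈ B, ∃ σ, hShift y σ d ∈ S := by
  obtain ⟨x, hx, y, hy, h2, rfl⟩ := h.1
  obtain ⟨σ, hσ⟩ := exists_hShift_eq h2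
  exact ⟨y, hy, σ, by rwa [hσ]⟩

lemma exists_hShift_mem_right (h : hDistEq S B d) : ∃ x ∈ S, ∃ σ, hShift x σ d ∈ B := by
  obtain ⟨x, hx, y, hy, h2, rfl⟩ := h.1
  obtain ⟨σ, hσ⟩ := exists_hShift_eq h2.symm
  exact ⟨x, hx, σ, by rwa [← Int.natAbs_neg, neg_sub, hσ]⟩

end hDistEq

/-- The code `(σ, k, w)` of a region relative to `B`: start at the horizontal shift by `d`, in
direction `σ`, of the `k`-th site of `B`, and walk along `w`. -/
def anchoredRegion (B : Finset Site) (d : ℕ) {m N : ℕ}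
    (c : Bool × Fin m × List.Vector (Fin 4) N) : Finset Site :=
  Site.visited (hShift (B.toList.getD c.2.1 0) c.1 d) c.2.2.toList

lemma exists_anchoredRegion_eq {S B : Finset Site} {d m s : ℕ} (hS : ConnectedIn S)
    (hSs : S.card = s) (hBm : B.card = m) (h : ∃ y ∈ B, ∃ σ, hShift y σ d ∈ S) :
    ∃ c : Bool × Fin m × List.Vector (Fin 4) (2 * (s - 1)), anchoredRegion B d c = S := by
  obtain ⟨y, hy, σ, hσ⟩ := h
  obtain ⟨k, hk, rfl⟩ := List.mem_iff_getElem.1 (Finset.mem_toList.2 hy)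
  obtain ⟨l, hlen, hl⟩ := hS.exists_visited_eq hσ
  refine ⟨(σ, ⟨k, by simpa [hBm] using hk⟩, ⟨l, hSs ▸ hlen⟩), ?_⟩
  simp only [anchoredRegion, List.getD_eq_getElem _ _ hk, List.Vector.toList_mk, hl]

lemma Set.finite_and_ncard_le_of_encode {α C : Type*} [Finite C] {T : Set α}
    (R : C → α → Prop) (hex : ∀ x ∈ T, ∃ c, R c x) (huniq : ∀ c x y, R c x → R c y → x = y) :
    T.Finite ∧ T.ncard ≤ Nat.card C := by
  choose f hf using hex
  have hinj : Function.Injective fun x : T => f x x.2 := fun x y (hxy : f x x.2 = f y y.2) =>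
    Subtype.ext (huniq _ _ _ (hf x x.2) (hxy ▸ hf y y.2))
  exact ⟨Set.finite_coe_iff.1 (Finite.of_injective _ hinj),
    Nat.card_coe_set_eq T ▸ Nat.card_le_card_of_injective _ hinj⟩

section AnchoredFamilies

variable {ι : Type*} [Fintype ι] (r : ι) (p : ι → ι) (A : Finset Site)

def anchor (SS : ι → Finset Site) (i : ι) : Finset Site :=
  if i = r then A else SS (p i)

def anchoredFamilies (s g : ι → ℕ) : Set (ι → Finset Site) :=
  {SS | ∀ i, ConnectedIn (SS i) ∧ (SS i).card = s i ∧
    ∃ y ∈ anchor r p A SS i, ∃ σ, hShift y σ (g i) ∈ SS i}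

variable {r p}

/-- Each region is recovered from its code and its anchor, so by induction along `p` (towards the
root, as `rank` decreases) the codes determine the family. -/
theorem finite_and_ncard_anchoredFamilies_le (rank : ι → ℕ)
    (hrank : ∀ i, i ≠ r → rank (p i) < rank i) (s g : ι → ℕ) :
    (anchoredFamilies r p A s g).Finite ∧ (anchoredFamilies r p A s g).ncard ≤
      ∏ i, 2 * (if i = r then A.card else s (p i)) * 4 ^ (2 * (s i - 1)) := by
  let Code := (i : ι) → Bool × Fin (if i = r then A.card else s (p i)) ×
    List.Vector (Fin 4) (2 * (s i - 1))
  have hcard : Nat.card Code =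
      ∏ i, 2 * (if i = r then A.card else s (p i)) * 4 ^ (2 * (s i - 1)) := by
    simp [Code, Nat.card_eq_fintype_card, Fintype.card_pi, mul_assoc]
  rw [← hcard]
  refine Set.finite_and_ncard_le_of_encode
    (fun (c : Code) SS => ∀ i, anchoredRegion (anchor r p A SS i) (g i) (c i) = SS i)
    (fun SS hSS => ?_) (fun c SS SS' hc hc' => ?_)
  · have hanchor : ∀ i, (anchor r p A SS i).card = if i = r then A.card else s (p i) := by
      intro i
      unfold anchor
      split_ifs
      exacts [rfl, (hSS (p i)).2.1]
    choose c hc using fun i =>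
      exists_anchoredRegion_eq (hSS i).1 (hSS i).2.1 (hanchor i) (hSS i).2.2
    exact ⟨c, hc⟩
  · funext i
    induction hi : rank i using Nat.strong_induction_on generalizing i with
    | _ k ih =>
      rw [← hc i, ← hc' i]
      unfold anchor
      split_ifs with hir
      · rfl
      · rw [ih _ (hi ▸ hrank i hir) (p i) rfl]

end AnchoredFamilies

namespace SimpleGraph

variable {V : Type*} {G : SimpleGraph V}

lemma Connected.exists_parent (hG : G.Connected) (r : V) :
    ∃ p : V → V, ∀ i, i ≠ r → G.Adj (p i) i ∧ G.dist r (p i) < G.dist r i := by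
  have : ∀ i, ∃ j, i ≠ r → G.Adj j i ∧ G.dist r j < G.dist r i := by
    intro i
    by_cases hir : i = r
    · exact ⟨r, fun h => absurd hir h⟩
    obtain ⟨q, hq⟩ := hG.exists_walk_length_eq_dist r i
    have hq0 : ¬q.Nil := fun h => hir h.eq.symm
    refine ⟨q.penultimate, fun _ => ⟨q.adj_penultimate hq0, ?_⟩⟩
    have hpos : 0 < q.length := Walk.not_nil_iff_lt_length.1 hq0
    calc G.dist r q.penultimate ≤ q.dropLast.length := dist_le _
      _ < G.dist r i := by rw [Walk.length_dropLast, ← hq]; omega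
  choose p hp using this
  exact ⟨p, hp⟩

lemma ncard_neighborSet [Fintype V] (v : V) : (G.neighborSet v).ncard = G.degree v := by
  rw [← Nat.card_coe_set_eq, Nat.card_eq_fintype_card, card_neighborSet_eq_degree]

/-- Each `v` is the parent of at most `deg v` vertices. -/
lemma prod_comp_parent_le [Fintype V] (f : V → ℕ) (hf : ∀ v, 1 ≤ f v) (p : V → V)
    {E : Finset V} (hp : ∀ i ∈ E, G.Adj (p i) i) :
    ∏ i ∈ E, f (p i) ≤ ∏ v, f v ^ G.degree v := by
  rw [Finset.prod_comp]
  refine (Finset.prod_le_prod' fun v _ => Nat.pow_le_pow_right (hf v) ?_).trans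
    (Finset.prod_le_prod_of_subset_of_one_le' (Finset.subset_univ _)
      fun v _ _ => Nat.one_le_pow _ _ (hf v))
  rw [← card_neighborFinset_eq_degree]
  refine Finset.card_le_card fun i hi => ?_
  obtain ⟨hiE, rfl⟩ := Finset.mem_filter.1 hi
  exact (mem_neighborFinset _ _ _).2 (hp i hiE)

end SimpleGraph

lemma cast_prod_anchoredCode_card_le {ι : Type*} [Fintype ι] (G : SimpleGraph ι) (r : ι)
    (p : ι → ι) (hp : ∀ i, i ≠ r → G.Adj (p i) i) (A : Finset Site) (s : ι → ℕ)
    (hs : ∀ i, 1 ≤ s i) :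
    ((∏ i, 2 * (if i = r then A.card else s (p i)) * 4 ^ (2 * (s i - 1)) : ℕ) : ℝ) ≤
      A.card * ∏ i, (32 / 3 * 4 ^ (4 * s i) * (s i : ℝ) ^ (G.neighborSet i).ncard) := by
  have hm : ∏ i, (if i = r then A.card else s (p i)) ≤ A.card * ∏ i, s i ^ G.degree i := by
    rw [← Finset.mul_prod_erase _ _ (Finset.mem_univ r), if_pos rfl]
    refine Nat.mul_le_mul_left _ ?_
    rw [Finset.prod_congr rfl fun i hi => if_neg (Finset.ne_of_mem_erase hi)]
    exact G.prod_comp_parent_le s hs p fun i hi => hp i (Finset.ne_of_mem_erase hi)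
  have hwalks : ∀ t : ℕ, (2 : ℝ) * 4 ^ (2 * (t - 1)) ≤ 32 / 3 * 4 ^ (4 * t) := fun t =>
    mul_le_mul (by norm_num) (pow_le_pow_right₀ (by norm_num) (by omega)) (by positivity)
      (by norm_num)
  calc ((∏ i, 2 * (if i = r then A.card else s (p i)) * 4 ^ (2 * (s i - 1)) : ℕ) : ℝ)
      = ((∏ i, (if i = r then A.card else s (p i)) : ℕ) : ℝ) *
          ∏ i, (2 : ℝ) * 4 ^ (2 * (s i - 1)) := by
        push_cast
        rw [← Finset.prod_mul_distrib]
        exact Finset.prod_congr rfl fun i _ => by ring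
    _ ≤ ((A.card * ∏ i, s i ^ G.degree i : ℕ) : ℝ) * ∏ i, (32 / 3 * 4 ^ (4 * s i) : ℝ) := by
        refine mul_le_mul (by exact_mod_cast hm) ?_ (by positivity) (by positivity)
        exact Finset.prod_le_prod (fun i _ => by positivity) fun i _ => hwalks (s i)
    _ = A.card * ∏ i, (32 / 3 * 4 ^ (4 * s i) * (s i : ℝ) ^ (G.neighborSet i).ncard) := by
        push_cast
        rw [mul_assoc, ← Finset.prod_mul_distrib]
        simp only [G.ncard_neighborSet, mul_comm]

theorem finite_and_ncard_families_le_of_connected {ι : Type*} [Fintype ι] {G : SimpleGraph ι}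
    (hG : G.Connected) (r : ι) {s : ι → ℕ} (hs : ∀ i, 1 ≤ s i) (dd : ι → ι → ℕ)
    (A : Finset Site) (dA : ℕ) {T : Set (ι → Finset Site)}
    (hT : ∀ SS ∈ T, (∀ i, ConnectedIn (SS i) ∧ (SS i).card = s i) ∧
      (∃ y ∈ A, ∃ σ, hShift y σ dA ∈ SS r) ∧
      ∀ i j, G.Adj i j → hDistEq (SS i) (SS j) (dd i j)) :
    T.Finite ∧ (T.ncard : ℝ) ≤
      A.card * ∏ i, (32 / 3 * 4 ^ (4 * s i) * (s i : ℝ) ^ (G.neighborSet i).ncard) := by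
  obtain ⟨p, hp⟩ := hG.exists_parent r
  have hsub : T ⊆ anchoredFamilies r p A s fun i => if i = r then dA else dd (p i) i := by
    intro SS hSS i
    replace hSS := hT SS hSS
    refine ⟨(hSS.1 i).1, (hSS.1 i).2, ?_⟩
    simp only [anchor]
    split_ifs with hir
    · exact hir ▸ hSS.2.1
    · exact (hSS.2.2 _ _ (hp i hir).1).exists_hShift_mem_right
  obtain ⟨hfin, hcard⟩ := finite_and_ncard_anchoredFamilies_le A (G.dist r)
    (fun i hir => (hp i hir).2) s fun i => if i = r then dA else dd (p i) i
  refine ⟨hfin.subset hsub, ?_⟩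
  calc (T.ncard : ℝ) ≤ _ := by exact_mod_cast (Set.ncard_le_ncard hsub hfin).trans hcard
    _ ≤ _ := cast_prod_anchoredCode_card_le G r p (fun i hir => (hp i hir).1) A s hs

theorem tree_indexed_entropy_general (n : ℕ) (hn : 1 ≤ n) (Λ F : Finset Site)
    (𝒯 : SimpleGraph (Fin n)) (h𝒯 : 𝒯.IsTree)
    (s : Fin n → ℕ) (hs : ∀ i, 2 ≤ s i)
    (dd : Fin n → Fin n → ℕ) :
    (∀ (A : Finset Site) (dA : ℕ), 1 ≤ dA →
      {SS : Fin n → Finset Site | PSfam Λ F SS ∧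
          hDistEq (SS ⟨0, hn⟩) A dA ∧ (∀ i, (SS i).card = s i) ∧
          ∀ i j, 𝒯.Adj i j → hDistEq (SS i) (SS j) (dd i j)}.Finite ∧
      ({SS : Fin n → Finset Site | PSfam Λ F SS ∧
          hDistEq (SS ⟨0, hn⟩) A dA ∧ (∀ i, (SS i).card = s i) ∧
          ∀ i j, 𝒯.Adj i j → hDistEq (SS i) (SS j) (dd i j)}.ncard : ℝ) ≤
        (A.card : ℝ) *
          ∏ i, (32 / 3 * 4 ^ (4 * s i) *
            (s i : ℝ) ^ (𝒯.neighborSet i).ncard)) ∧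
    (∀ x : Site,
      {SS : Fin n → Finset Site | PSfam Λ F SS ∧
          x ∈ SS ⟨0, hn⟩ ∧ (∀ i, (SS i).card = s i) ∧
          ∀ i j, 𝒯.Adj i j → hDistEq (SS i) (SS j) (dd i j)}.Finite ∧
      ({SS : Fin n → Finset Site | PSfam Λ F SS ∧
          x ∈ SS ⟨0, hn⟩ ∧ (∀ i, (SS i).card = s i) ∧
          ∀ i j, 𝒯.Adj i j → hDistEq (SS i) (SS j) (dd i j)}.ncard : ℝ) ≤
        ∏ i, (32 / 3 * 4 ^ (4 * s i) *
          (s i : ℝ) ^ (𝒯.neighborSet i).ncard)) := by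
  have count := finite_and_ncard_families_le_of_connected h𝒯.connected ⟨0, hn⟩
    (fun i => (hs i).trans' one_le_two) dd
  refine ⟨fun A dA _ => count A dA ?_, fun x => ?_⟩
  · rintro SS ⟨hPS, hA, hcard, hedge⟩
    exact ⟨fun i => ⟨(hPS.1 i).2.2.1, hcard i⟩, hA.exists_hShift_mem_left, hedge⟩
  · convert count {x} 0 ?_ using 2
    · simp
    · rintro SS ⟨hPS, hx, hcard, hedge⟩
      exact ⟨fun i => ⟨(hPS.1 i).2.2.1, hcard i⟩, ⟨x, Finset.mem_singleton_self x, true,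
        by simpa [hShift]⟩, hedge⟩

/-- **Lemma 4 (tree-indexed entropy bound for families of regions).**
Let `n ≥ 1`, let `𝒯` be a tree on `{1,…,n}`, `s_i ≥ 2`, `d_{ij} ≥ 2` on the
edges of `𝒯`. Then (a) for every finite `A ⊂ ℤ²` and `1 ≤ d < ∞`, the number
of families `(S_i) ∈ 𝒫𝒮_Λ` with `dist_h(S_1,A) = d`, `|S_i| = s_i` and
`dist_h(S_i,S_j) = d_{ij}` on the edges of `𝒯` is at most
`|A|·∏_i (32/3)·4^{4s_i}·s_i^{deg_𝒯(i)}`; and (b) for every `x ∈ ℤ²`, the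
number of such families with `S_1 ∋ x` instead is at most
`∏_i (32/3)·4^{4s_i}·s_i^{deg_𝒯(i)}`. -/
theorem tree_indexed_entropy (n : ℕ) (hn : 1 ≤ n) (Λ F : Finset Site)
    (𝒯 : SimpleGraph (Fin n)) (h𝒯 : 𝒯.IsTree)
    (s : Fin n → ℕ) (hs : ∀ i, 2 ≤ s i)
    (dd : Fin n → Fin n → ℕ) (hdd : ∀ i j, 𝒯.Adj i j → 2 ≤ dd i j) :
    (∀ (A : Finset Site) (dA : ℕ), 1 ≤ dA →
      {SS : Fin n → Finset Site | PSfam Λ F SS ∧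
          hDistEq (SS ⟨0, hn⟩) A dA ∧ (∀ i, (SS i).card = s i) ∧
          ∀ i j, 𝒯.Adj i j → hDistEq (SS i) (SS j) (dd i j)}.Finite ∧
      ({SS : Fin n → Finset Site | PSfam Λ F SS ∧
          hDistEq (SS ⟨0, hn⟩) A dA ∧ (∀ i, (SS i).card = s i) ∧
          ∀ i j, 𝒯.Adj i j → hDistEq (SS i) (SS j) (dd i j)}.ncard : ℝ) ≤
        (A.card : ℝ) *
          ∏ i, (32 / 3 * 4 ^ (4 * s i) *
            (s i : ℝ) ^ (𝒯.neighborSet i).ncard)) ∧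
    (∀ x : Site,
      {SS : Fin n → Finset Site | PSfam Λ F SS ∧
          x ∈ SS ⟨0, hn⟩ ∧ (∀ i, (SS i).card = s i) ∧
          ∀ i j, 𝒯.Adj i j → hDistEq (SS i) (SS j) (dd i j)}.Finite ∧
      ({SS : Fin n → Finset Site | PSfam Λ F SS ∧
          x ∈ SS ⟨0, hn⟩ ∧ (∀ i, (SS i).card = s i) ∧
          ∀ i j, 𝒯.Adj i j → hDistEq (SS i) (SS j) (dd i j)}.ncard : ℝ) ≤
        ∏ i, (32 / 3 * 4 ^ (4 * s i) *
          (s i : ℝ) ^ (𝒯.neighborSet i).ncard)) :=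
  tree_indexed_entropy_general n hn Λ F 𝒯 h𝒯 s hs dd
end
end

section
/- Diagonalizability of the transfer matrix (Proposition A.2, first part, with the footnoted discriminant claim): For all real a, b with 0 ≤ a, b ≤ 1 and (a,b) ≠ (1,0), the characteristic polynomial p(λ) = det(λI − T) = −ab + (λ − a)(λ² − 1) of the transfer matrix T = ((0, 1, √(ab)), (1, 0, 0), (0, √(ab), a)) has three distinct real roots; equivalently its discriminant Δ = 18a(1−b) + 4a²(1−b) + a² + 4 − 27a²(1−b)² is strictly positive. In particular, for every β > 0 (with J > 0 and μ_h + J > 0, so that a = e^{−β(μ_h+J)/2} ∈ (0,1) and b = e^{−βJ} ∈ (0,1)), T is diagonalizable over ℝ. -/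
open scoped BigOperators

noncomputable section

/-- The transfer matrix `T = ((0, 1, √(ab)), (1, 0, 0), (0, √(ab), a))`. -/
def Tmat (a b : ℝ) : Matrix (Fin 3) (Fin 3) ℝ :=
  !![0, 1, Real.sqrt (a * b); 1, 0, 0; 0, Real.sqrt (a * b), a]

/-!
The characteristic polynomial `p(x) = (x - a)(x² - 1) - ab` satisfies `p(-2) < 0`,
`p(-1/2) > 0`, `p((1 + a)/2) = -(1 - a)²(3 + a)/8 - ab < 0` and `p(2) > 0` on the whole
parameter square except at `(a, b) = (1, 0)`, so the intermediate value theorem yields three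
distinct real roots.
For such a root `r`, the vector `((r - a) r, r - a, √(ab))` is an eigenvector of `T`; the
matrix of three of them has determinant `√(ab)` times a Vandermonde determinant, hence is
invertible as soon as `ab > 0`.
-/

open Matrix

section Cubic

variable {R : Type*} [CommRing R] [IsDomain R] {A B C r₁ r₂ r₃ : R}

theorem cubic_eq_mul_of_three_roots (h₁₂ : r₁ ≠ r₂) (h₁₃ : r₁ ≠ r₃) (h₂₃ : r₂ ≠ r₃)
    (e₁ : r₁ ^ 3 + A * r₁ ^ 2 + B * r₁ + C = 0) (e₂ : r₂ ^ 3 + A * r₂ ^ 2 + B * r₂ + C = 0)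
    (e₃ : r₃ ^ 3 + A * r₃ ^ 2 + B * r₃ + C = 0) (x : R) :
    x ^ 3 + A * x ^ 2 + B * x + C = (x - r₁) * (x - r₂) * (x - r₃) := by
  -- Vieta's formulas, obtained by dividing differences of the root equations.
  have k₁₂ : r₁ ^ 2 + r₁ * r₂ + r₂ ^ 2 + A * (r₁ + r₂) + B = 0 := by
    apply mul_left_cancel₀ (sub_ne_zero.mpr h₁₂); linear_combination e₁ - e₂
  have k₁₃ : r₁ ^ 2 + r₁ * r₃ + r₃ ^ 2 + A * (r₁ + r₃) + B = 0 := by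
    apply mul_left_cancel₀ (sub_ne_zero.mpr h₁₃); linear_combination e₁ - e₃
  have hA : A = -(r₁ + r₂ + r₃) := by
    apply mul_left_cancel₀ (sub_ne_zero.mpr h₂₃); linear_combination k₁₂ - k₁₃
  have hB : B = r₁ * r₂ + r₁ * r₃ + r₂ * r₃ := by linear_combination k₁₂ - (r₁ + r₂) * hA
  have hC : C = -(r₁ * r₂ * r₃) := by linear_combination e₁ - r₁ ^ 2 * hA - r₁ * hB
  linear_combination x ^ 2 * hA + x * hB + hC

theorem cubic_eq_zero_iff_of_three_roots (h₁₂ : r₁ ≠ r₂) (h₁₃ : r₁ ≠ r₃) (h₂₃ : r₂ ≠ r₃)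
    (e₁ : r₁ ^ 3 + A * r₁ ^ 2 + B * r₁ + C = 0) (e₂ : r₂ ^ 3 + A * r₂ ^ 2 + B * r₂ + C = 0)
    (e₃ : r₃ ^ 3 + A * r₃ ^ 2 + B * r₃ + C = 0) (x : R) :
    x ^ 3 + A * x ^ 2 + B * x + C = 0 ↔ x = r₁ ∨ x = r₂ ∨ x = r₃ := by
  rw [cubic_eq_mul_of_three_roots h₁₂ h₁₃ h₂₃ e₁ e₂ e₃, mul_eq_zero, mul_eq_zero,
    sub_eq_zero, sub_eq_zero, sub_eq_zero, or_assoc]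

end Cubic

def transferCharPoly (a b x : ℝ) : ℝ := (x - a) * (x ^ 2 - 1) - a * b

section Transfer

variable {a b : ℝ}

theorem det_smul_one_sub_Tmat (hab : 0 ≤ a * b) (x : ℝ) :
    (x • (1 : Matrix (Fin 3) (Fin 3) ℝ) - Tmat a b).det = transferCharPoly a b x := by
  have hsq : √(a * b) * √(a * b) = a * b := Real.mul_self_sqrt hab
  simp only [Tmat, det_fin_three, Matrix.sub_apply, Matrix.smul_apply, one_apply, of_apply,
    cons_val', cons_val_zero, cons_val_one, cons_val, cons_val_fin_one, Fin.isValue, Fin.reduceEq,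
    ↓reduceIte, smul_eq_mul, transferCharPoly]
  linear_combination -hsq

theorem transfer_disc_pos (ha : 0 ≤ a) (ha₁ : a ≤ 1) (hb : 0 ≤ b) (hb₁ : b ≤ 1)
    (hne : (a, b) ≠ (1, 0)) :
    0 < 18 * a * (1 - b) + 4 * a ^ 2 * (1 - b) + a ^ 2 + 4 - 27 * a ^ 2 * (1 - b) ^ 2 := by
  have key : 18 * a * (1 - b) + 4 * a ^ 2 * (1 - b) + a ^ 2 + 4 - 27 * a ^ 2 * (1 - b) ^ 2 =
      b * (4 + a ^ 2) + (1 - b) * (1 - a) * (22 * a + 4) + 27 * a ^ 2 * (1 - b) * b := by ring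
  have h₁ : 0 ≤ (1 - b) * (1 - a) * (22 * a + 4) := by
    have := sub_nonneg.mpr ha₁; have := sub_nonneg.mpr hb₁; positivity
  have h₂ : 0 ≤ 27 * a ^ 2 * (1 - b) * b := by have := sub_nonneg.mpr hb₁; positivity
  rw [key]
  rcases hb.eq_or_lt with rfl | hb₀
  · have ha₁' : a < 1 := ha₁.lt_of_ne (by rintro rfl; exact hne rfl)
    nlinarith
  · nlinarith

theorem transferCharPoly_midpoint_neg (ha : 0 ≤ a) (ha₁ : a ≤ 1) (hb : 0 ≤ b)
    (hne : (a, b) ≠ (1, 0)) : transferCharPoly a b ((1 + a) / 2) < 0 := by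
  have key : transferCharPoly a b ((1 + a) / 2) = -((1 - a) ^ 2 * (3 + a)) / 8 - a * b := by
    unfold transferCharPoly; ring
  rw [key]
  rcases ha₁.eq_or_lt with rfl | ha₁'
  · have hb₀ : 0 < b := hb.lt_of_ne (by rintro rfl; exact hne rfl)
    nlinarith
  · have : 0 < (1 - a) ^ 2 * (3 + a) := by have := sub_pos.mpr ha₁'; positivity
    nlinarith [mul_nonneg ha hb]

theorem exists_transferCharPoly_roots (ha : 0 ≤ a) (ha₁ : a ≤ 1) (hb : 0 ≤ b) (hb₁ : b ≤ 1)
    (hne : (a, b) ≠ (1, 0)) :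
    ∃ r₁ r₂ r₃ : ℝ, r₁ < r₂ ∧ r₂ < r₃ ∧ transferCharPoly a b r₁ = 0 ∧
      transferCharPoly a b r₂ = 0 ∧ transferCharPoly a b r₃ = 0 := by
  have hc : Continuous (transferCharPoly a b) := by unfold transferCharPoly; fun_prop
  have hm₂ : transferCharPoly a b (-2) < 0 := by unfold transferCharPoly; nlinarith
  have hm : 0 < transferCharPoly a b (-1 / 2) := by unfold transferCharPoly; nlinarith
  have hmid := transferCharPoly_midpoint_neg ha ha₁ hb hne
  have h₂ : 0 < transferCharPoly a b 2 := by unfold transferCharPoly; nlinarith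
  obtain ⟨r₁, ⟨-, hr₁⟩, e₁⟩ := intermediate_value_Ioo (by norm_num : (-2 : ℝ) ≤ -1 / 2)
    hc.continuousOn ⟨hm₂, hm⟩
  obtain ⟨r₂, ⟨hr₂, hr₂'⟩, e₂⟩ :=
    intermediate_value_Ioo' (by linarith : (-1 / 2 : ℝ) ≤ (1 + a) / 2) hc.continuousOn ⟨hmid, hm⟩
  obtain ⟨r₃, ⟨hr₃, -⟩, e₃⟩ := intermediate_value_Ioo (by linarith : (1 + a) / 2 ≤ (2 : ℝ))
    hc.continuousOn ⟨hmid, h₂⟩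
  exact ⟨r₁, r₂, r₃, hr₁.trans hr₂, hr₂'.trans hr₃, e₁, e₂, e₃⟩

theorem transferCharPoly_eq_zero_iff {r₁ r₂ r₃ : ℝ} (h₁₂ : r₁ < r₂) (h₂₃ : r₂ < r₃)
    (e₁ : transferCharPoly a b r₁ = 0) (e₂ : transferCharPoly a b r₂ = 0)
    (e₃ : transferCharPoly a b r₃ = 0) (x : ℝ) :
    transferCharPoly a b x = 0 ↔ x = r₁ ∨ x = r₂ ∨ x = r₃ := by
  have expand : ∀ y, transferCharPoly a b y = y ^ 3 + (-a) * y ^ 2 + (-1) * y + (a - a * b) :=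
    fun y ↦ by unfold transferCharPoly; ring
  simp only [expand] at e₁ e₂ e₃ ⊢
  exact cubic_eq_zero_iff_of_three_roots h₁₂.ne (h₁₂.trans h₂₃).ne h₂₃.ne e₁ e₂ e₃ x

def transferEigenvectors (a b r₁ r₂ r₃ : ℝ) : Matrix (Fin 3) (Fin 3) ℝ :=
  !![(r₁ - a) * r₁, (r₂ - a) * r₂, (r₃ - a) * r₃;
     r₁ - a, r₂ - a, r₃ - a;
     √(a * b), √(a * b), √(a * b)]

theorem Tmat_mul_transferEigenvectors (hab : 0 ≤ a * b) {r₁ r₂ r₃ : ℝ}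
    (e₁ : transferCharPoly a b r₁ = 0) (e₂ : transferCharPoly a b r₂ = 0)
    (e₃ : transferCharPoly a b r₃ = 0) :
    Tmat a b * transferEigenvectors a b r₁ r₂ r₃ =
      transferEigenvectors a b r₁ r₂ r₃ * diagonal ![r₁, r₂, r₃] := by
  have hsq : √(a * b) * √(a * b) = a * b := Real.mul_self_sqrt hab
  unfold transferCharPoly at e₁ e₂ e₃
  ext i j
  fin_cases i <;> fin_cases j <;>
    simp only [Tmat, transferEigenvectors, mul_apply, Fin.sum_univ_three, diagonal_apply, of_apply,
      cons_val', cons_val_zero, cons_val_one, cons_val, cons_val_fin_one, Fin.isValue,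
      Fin.reduceFinMk, Fin.mk_one, Fin.zero_eta, Fin.reduceEq, ↓reduceIte]
  · linear_combination hsq - e₁
  · linear_combination hsq - e₂
  · linear_combination hsq - e₃
  all_goals ring

theorem det_transferEigenvectors (a b r₁ r₂ r₃ : ℝ) :
    (transferEigenvectors a b r₁ r₂ r₃).det = √(a * b) * (r₁ - r₂) * (r₂ - r₃) * (r₁ - r₃) := by
  simp only [transferEigenvectors, det_fin_three, of_apply, cons_val', cons_val_zero,
    cons_val_one, cons_val, cons_val_fin_one, Fin.isValue]
  ring

theorem Tmat_diagonalizable (hab : 0 < a * b) {r₁ r₂ r₃ : ℝ} (h₁₂ : r₁ < r₂) (h₂₃ : r₂ < r₃)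
    (e₁ : transferCharPoly a b r₁ = 0) (e₂ : transferCharPoly a b r₂ = 0)
    (e₃ : transferCharPoly a b r₃ = 0) :
    ∃ P D : Matrix (Fin 3) (Fin 3) ℝ, IsUnit P.det ∧ D.IsDiag ∧ Tmat a b = P * D * P⁻¹ := by
  set P := transferEigenvectors a b r₁ r₂ r₃
  have hP : IsUnit P.det := by
    rw [isUnit_iff_ne_zero, det_transferEigenvectors]
    exact mul_ne_zero (mul_ne_zero (mul_ne_zero (Real.sqrt_pos.mpr hab).ne'
      (sub_ne_zero.mpr h₁₂.ne)) (sub_ne_zero.mpr h₂₃.ne)) (sub_ne_zero.mpr (h₁₂.trans h₂₃).ne)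
  refine ⟨P, diagonal ![r₁, r₂, r₃], hP, isDiag_diagonal _, ?_⟩
  rw [← Tmat_mul_transferEigenvectors hab.le e₁ e₂ e₃, mul_nonsing_inv_cancel_right _ _ hP]

end Transfer

/-- **Proposition A.2, first part (diagonalizability of the transfer matrix),
with the footnoted discriminant claim.** For all `a, b ∈ [0,1]` with
`(a,b) ≠ (1,0)`, the characteristic polynomial
`p(λ) = det(λI − T) = (λ−a)(λ²−1) − ab` has three distinct real roots;
equivalently, the discriminant `Δ = 18a(1−b) + 4a²(1−b) + a² + 4 − 27a²(1−b)²`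
is strictly positive. In particular, for every `β > 0` (with `J > 0` and
`μ_h + J > 0`, so that `a = e^{−β(μ_h+J)/2} ∈ (0,1)` and `b = e^{−βJ} ∈ (0,1)`)
the matrix `T` is diagonalizable over `ℝ`. -/
theorem transfer_matrix_diagonalizable :
    (∀ a b : ℝ, 0 ≤ a → a ≤ 1 → 0 ≤ b → b ≤ 1 → (a, b) ≠ ((1 : ℝ), (0 : ℝ)) →
      (∀ lam : ℝ,
          Matrix.det (lam • (1 : Matrix (Fin 3) (Fin 3) ℝ) - Tmat a b) =
            (lam - a) * (lam ^ 2 - 1) - a * b) ∧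
      (0 < 18 * a * (1 - b) + 4 * a ^ 2 * (1 - b) + a ^ 2 + 4 -
            27 * a ^ 2 * (1 - b) ^ 2) ∧
      (∃ r₁ r₂ r₃ : ℝ, r₁ ≠ r₂ ∧ r₁ ≠ r₃ ∧ r₂ ≠ r₃ ∧
        ∀ lam : ℝ, (lam - a) * (lam ^ 2 - 1) - a * b = 0 ↔
          (lam = r₁ ∨ lam = r₂ ∨ lam = r₃))) ∧
    (∀ β J μh : ℝ, 0 < β → 0 < J → 0 < μh + J →
      ∃ P D : Matrix (Fin 3) (Fin 3) ℝ, IsUnit P.det ∧ D.IsDiag ∧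
        Tmat (Real.exp (-(β * (μh + J) / 2))) (Real.exp (-(β * J))) =
          P * D * P⁻¹) := by
  refine ⟨fun a b ha ha₁ hb hb₁ hne ↦ ?_, fun β J μh hβ hJ hμ ↦ ?_⟩
  · obtain ⟨r₁, r₂, r₃, h₁₂, h₂₃, e₁, e₂, e₃⟩ := exists_transferCharPoly_roots ha ha₁ hb hb₁ hne
    exact ⟨det_smul_one_sub_Tmat (mul_nonneg ha hb), transfer_disc_pos ha ha₁ hb hb₁ hne,
      r₁, r₂, r₃, h₁₂.ne, (h₁₂.trans h₂₃).ne, h₂₃.ne,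
      transferCharPoly_eq_zero_iff h₁₂ h₂₃ e₁ e₂ e₃⟩
  · have ha₁ : Real.exp (-(β * (μh + J) / 2)) ≤ 1 :=
      Real.exp_le_one_iff.mpr (by nlinarith [mul_pos hβ hμ])
    have hb₁ : Real.exp (-(β * J)) ≤ 1 := Real.exp_le_one_iff.mpr (by nlinarith [mul_pos hβ hJ])
    have hne : (Real.exp (-(β * (μh + J) / 2)), Real.exp (-(β * J))) ≠ (1, 0) :=
      fun h ↦ (Real.exp_pos _).ne' (Prod.mk.inj h).2
    obtain ⟨r₁, r₂, r₃, h₁₂, h₂₃, e₁, e₂, e₃⟩ :=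
      exists_transferCharPoly_roots (Real.exp_pos _).le ha₁ (Real.exp_pos _).le hb₁ hne
    exact Tmat_diagonalizable (by positivity) h₁₂ h₂₃ e₁ e₂ e₃
end
end

section
/- Eigenvalue asymptotics of the transfer matrix (Proposition A.2, second part): Fix J > 0 and μ_h with μ_h + J > 0, and set a = a(β) = e^{−β(μ_h+J)/2}, b = b(β) = e^{−βJ}. Let λ₁(β) > λ₃(β) > λ₂(β) denote the three (distinct, real) eigenvalues of T ordered so that λ₁ → 1, λ₂ → −1, λ₃ → 0 as β → ∞. Then as β → ∞: (λ₁ − 1)/(ab) → 1/2, (λ₂ + 1)/(ab) → 1/2, and (λ₃ − a + ab)/(a³b) → −1; i.e. λ₁ = 1 + (ab/2)(1+o(1)), λ₂ = −1 + (ab/2)(1+o(1)), λ₃ = a − ab − a³b·(1+o(1)). -/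
/-!
As `a, b → 0` the characteristic polynomial tends to `λ³ - λ`, so sign changes of `p` near
`-1`, `0`, `1` (intermediate value theorem) pin the three ordered roots there. The root equation
`(λ - a)(λ² - 1) = ab`, solved for the factor that vanishes in the limit, then gives each
expansion: `λ₁ - 1 = ab / ((λ₁ - a)(λ₁ + 1))`, `λ₂ + 1 = ab / ((λ₂ - a)(λ₂ - 1))`, and
`λ₃ - a = ab / (λ₃² - 1)`, whence `λ₃ / a → 1` and `λ₃ - a + ab = ab λ₃² / (λ₃² - 1)`.
-/

open Filter

noncomputable section

/-- `a(β) = e^{−β(μ_h+J)/2}`. -/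
def aOf (β μh J : ℝ) : ℝ := Real.exp (-(β * (μh + J) / 2))

/-- `b(β) = e^{−βJ}`. -/
def bOf (β J : ℝ) : ℝ := Real.exp (-(β * J))

/-- `λ` is a root of the characteristic polynomial
`p(λ) = (λ−a)(λ²−1) − ab` of the transfer matrix. -/
def IsCharRoot (a b lam : ℝ) : Prop := (lam - a) * (lam ^ 2 - 1) - a * b = 0

open Topology

section MonicCubic

variable {R : Type*} [CommRing R] [IsDomain R] {c d e x₁ x₂ x₃ : R}

theorem monic_cubic_eq_prod_of_roots (h₁ : x₁ ^ 3 + c * x₁ ^ 2 + d * x₁ + e = 0)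
    (h₂ : x₂ ^ 3 + c * x₂ ^ 2 + d * x₂ + e = 0) (h₃ : x₃ ^ 3 + c * x₃ ^ 2 + d * x₃ + e = 0)
    (h₁₂ : x₁ ≠ x₂) (h₁₃ : x₁ ≠ x₃) (h₂₃ : x₂ ≠ x₃) (x : R) :
    x ^ 3 + c * x ^ 2 + d * x + e = (x - x₁) * (x - x₂) * (x - x₃) := by
  have g₁₂ : x₁ ^ 2 + x₁ * x₂ + x₂ ^ 2 + c * (x₁ + x₂) + d = 0 := by
    refine (mul_eq_zero.mp ?_).resolve_left (sub_ne_zero.mpr h₁₂)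
    linear_combination h₁ - h₂
  have g₁₃ : x₁ ^ 2 + x₁ * x₃ + x₃ ^ 2 + c * (x₁ + x₃) + d = 0 := by
    refine (mul_eq_zero.mp ?_).resolve_left (sub_ne_zero.mpr h₁₃)
    linear_combination h₁ - h₃
  have vieta₁ : x₁ + x₂ + x₃ + c = 0 := by
    refine (mul_eq_zero.mp ?_).resolve_left (sub_ne_zero.mpr h₂₃)
    linear_combination g₁₂ - g₁₃
  have vieta₂ : x₁ * x₂ + x₁ * x₃ + x₂ * x₃ = d := by
    linear_combination (x₁ + x₂) * vieta₁ - g₁₂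
  have vieta₃ : x₁ * x₂ * x₃ = -e := by
    linear_combination h₁ + x₁ * vieta₂ - x₁ ^ 2 * vieta₁
  linear_combination x ^ 2 * vieta₁ - x * vieta₂ + vieta₃

theorem eq_or_eq_or_eq_of_monic_cubic_roots {y : R} (h₁ : x₁ ^ 3 + c * x₁ ^ 2 + d * x₁ + e = 0)
    (h₂ : x₂ ^ 3 + c * x₂ ^ 2 + d * x₂ + e = 0) (h₃ : x₃ ^ 3 + c * x₃ ^ 2 + d * x₃ + e = 0)
    (h₁₂ : x₁ ≠ x₂) (h₁₃ : x₁ ≠ x₃) (h₂₃ : x₂ ≠ x₃) (hy : y ^ 3 + c * y ^ 2 + d * y + e = 0) :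
    y = x₁ ∨ y = x₂ ∨ y = x₃ := by
  rw [monic_cubic_eq_prod_of_roots h₁ h₂ h₃ h₁₂ h₁₃ h₂₃] at hy
  simpa only [mul_eq_zero, sub_eq_zero, or_assoc] using hy

end MonicCubic

theorem eq_of_lt_of_lt_of_mem {α : Type*} [LinearOrder α] {x₁ x₂ x₃ y₁ y₂ y₃ : α}
    (hx₁₂ : x₁ < x₂) (hx₂₃ : x₂ < x₃) (hy₁₂ : y₁ < y₂) (hy₂₃ : y₂ < y₃)
    (h₁ : y₁ = x₁ ∨ y₁ = x₂ ∨ y₁ = x₃) (h₂ : y₂ = x₁ ∨ y₂ = x₂ ∨ y₂ = x₃)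
    (h₃ : y₃ = x₁ ∨ y₃ = x₂ ∨ y₃ = x₃) : y₁ = x₁ ∧ y₂ = x₂ ∧ y₃ = x₃ := by
  rcases h₁ with rfl | rfl | rfl <;> rcases h₂ with rfl | rfl | rfl <;>
    rcases h₃ with rfl | rfl | rfl <;> first | exact ⟨rfl, rfl, rfl⟩ | order

def charPoly (a b x : ℝ) : ℝ := (x - a) * (x ^ 2 - 1) - a * b

theorem continuous_charPoly (a b : ℝ) : Continuous (charPoly a b) := by
  unfold charPoly; fun_prop

theorem isCharRoot_iff_monic_cubic {a b x : ℝ} :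
    IsCharRoot a b x ↔ x ^ 3 + (-a) * x ^ 2 + (-1) * x + (a - a * b) = 0 := by
  unfold IsCharRoot; constructor <;> intro h <;> linear_combination h

theorem exists_mem_Ioo_isCharRoot {a b x y : ℝ} (hxy : x ≤ y)
    (hsign : charPoly a b x * charPoly a b y < 0) : ∃ r ∈ Set.Ioo x y, IsCharRoot a b r := by
  have hcont := (continuous_charPoly a b).continuousOn (s := Set.Icc x y)
  rcases mul_neg_iff.mp hsign with ⟨hx, hy⟩ | ⟨hx, hy⟩
  · exact intermediate_value_Ioo' hxy hcont ⟨hy, hx⟩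
  · exact intermediate_value_Ioo hxy hcont ⟨hx, hy⟩

theorem IsCharRoot.eq_or_eq_or_eq {a b x₁ x₂ x₃ y : ℝ} (hy : IsCharRoot a b y)
    (h₁ : IsCharRoot a b x₁) (h₂ : IsCharRoot a b x₂) (h₃ : IsCharRoot a b x₃) (h₁₂ : x₁ ≠ x₂)
    (h₁₃ : x₁ ≠ x₃) (h₂₃ : x₂ ≠ x₃) : y = x₁ ∨ y = x₂ ∨ y = x₃ := by
  rw [isCharRoot_iff_monic_cubic] at hy h₁ h₂ h₃
  exact eq_or_eq_or_eq_of_monic_cubic_roots h₁ h₂ h₃ h₁₂ h₁₃ h₂₃ hy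

theorem IsCharRoot.abs_sub_lt {a b ε l₁ l₂ l₃ : ℝ} (hε : ε < 1 / 2) (ha : 0 < a) (haε : a < ε / 2)
    (hb : 0 ≤ b) (hb₁ : b ≤ 1) (h₁ : IsCharRoot a b l₁) (h₂ : IsCharRoot a b l₂)
    (h₃ : IsCharRoot a b l₃) (h₂₃ : l₂ < l₃) (h₃₁ : l₃ < l₁) :
    |l₁ - 1| < ε ∧ |l₂ + 1| < ε ∧ |l₃| < ε := by
  have hab : a * b ≤ a := mul_le_of_le_one_right ha.le hb₁
  have hab₀ : 0 ≤ a * b := mul_nonneg ha.le hb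
  obtain ⟨rₗ, ⟨hrₗ, hrₗ'⟩, hrₗroot⟩ := exists_mem_Ioo_isCharRoot (a := a) (b := b)
    (by linarith : -1 - ε ≤ -1 + ε)
    (mul_neg_of_neg_of_pos (by unfold charPoly; nlinarith) (by unfold charPoly; nlinarith))
  obtain ⟨r₀, ⟨hr₀, hr₀'⟩, hr₀root⟩ := exists_mem_Ioo_isCharRoot (a := a) (b := b)
    (by linarith : -ε ≤ ε)
    (mul_neg_of_pos_of_neg (by unfold charPoly; nlinarith) (by unfold charPoly; nlinarith))
  obtain ⟨rᵤ, ⟨hrᵤ, hrᵤ'⟩, hrᵤroot⟩ := exists_mem_Ioo_isCharRoot (a := a) (b := b)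
    (by linarith : 1 - ε ≤ 1 + ε)
    (mul_neg_of_neg_of_pos (by unfold charPoly; nlinarith) (by unfold charPoly; nlinarith))
  have mem (r : ℝ) (hr : IsCharRoot a b r) : r = l₂ ∨ r = l₃ ∨ r = l₁ :=
    hr.eq_or_eq_or_eq h₂ h₃ h₁ h₂₃.ne (h₂₃.trans h₃₁).ne h₃₁.ne
  obtain ⟨rfl, rfl, rfl⟩ := eq_of_lt_of_lt_of_mem h₂₃ h₃₁ (by linarith) (by linarith)
    (mem rₗ hrₗroot) (mem r₀ hr₀root) (mem rᵤ hrᵤroot)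
  refine ⟨abs_lt.mpr ⟨?_, ?_⟩, abs_lt.mpr ⟨?_, ?_⟩, abs_lt.mpr ⟨?_, ?_⟩⟩ <;> linarith

theorem IsCharRoot.sub_mul_sq_sub_one_eq {a b l : ℝ} (h : IsCharRoot a b l) :
    (l - a) * (l ^ 2 - 1) = a * b :=
  sub_eq_zero.mp h

theorem IsCharRoot.sub_one_div_mul {a b l : ℝ} (h : IsCharRoot a b l) (hab : a * b ≠ 0) :
    (l - 1) / (a * b) = ((l - a) * (l + 1))⁻¹ := by
  have hfac : a * b = (l - a) * (l + 1) * (l - 1) := by rw [← h.sub_mul_sq_sub_one_eq]; ring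
  rw [hfac] at hab ⊢
  exact div_mul_cancel_right₀ (right_ne_zero_of_mul hab) _

theorem IsCharRoot.add_one_div_mul {a b l : ℝ} (h : IsCharRoot a b l) (hab : a * b ≠ 0) :
    (l + 1) / (a * b) = ((l - a) * (l - 1))⁻¹ := by
  have hfac : a * b = (l - a) * (l - 1) * (l + 1) := by rw [← h.sub_mul_sq_sub_one_eq]; ring
  rw [hfac] at hab ⊢
  exact div_mul_cancel_right₀ (right_ne_zero_of_mul hab) _

theorem IsCharRoot.div_eq_one_add {a b l : ℝ} (h : IsCharRoot a b l) (ha : a ≠ 0) (hb : b ≠ 0) :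
    l / a = 1 + b / (l ^ 2 - 1) := by
  have hprod := h.sub_mul_sq_sub_one_eq
  have hl : l ^ 2 - 1 ≠ 0 := right_ne_zero_of_mul (hprod ▸ mul_ne_zero ha hb)
  field_simp
  linear_combination hprod

theorem IsCharRoot.sub_add_mul_div {a b l : ℝ} (h : IsCharRoot a b l) (ha : a ≠ 0) (hb : b ≠ 0) :
    (l - a + a * b) / (a ^ 3 * b) = (l / a) ^ 2 / (l ^ 2 - 1) := by
  have hprod := h.sub_mul_sq_sub_one_eq
  have hl : l ^ 2 - 1 ≠ 0 := right_ne_zero_of_mul (hprod ▸ mul_ne_zero ha hb)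
  field_simp
  linear_combination hprod

section Asymptotics

variable {ι : Type*} {L : Filter ι}

theorem tendsto_charRoots {a b l₁ l₂ l₃ : ι → ℝ} (ha : Tendsto a L (𝓝[>] 0))
    (hb : Tendsto b L (𝓝[>] 0))
    (hroots : ∀ᶠ i in L, IsCharRoot (a i) (b i) (l₁ i) ∧ IsCharRoot (a i) (b i) (l₂ i) ∧
      IsCharRoot (a i) (b i) (l₃ i) ∧ l₂ i < l₃ i ∧ l₃ i < l₁ i) :
    Tendsto l₁ L (𝓝 1) ∧ Tendsto l₂ L (𝓝 (-1)) ∧ Tendsto l₃ L (𝓝 0) := by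
  have hloc : ∀ ε > 0, ∀ᶠ i in L, |l₁ i - 1| < ε ∧ |l₂ i + 1| < ε ∧ |l₃ i| < ε := by
    intro ε hε
    have hδ : 0 < min ε (1 / 4) := by positivity
    filter_upwards [hroots, ha (Ioo_mem_nhdsGT (half_pos hδ)), hb (Ioc_mem_nhdsGT one_pos)]
      with i ⟨h₁, h₂, h₃, h₂₃, h₃₁⟩ ⟨ha₀, haδ⟩ ⟨hb₀, hb₁⟩
    obtain ⟨e₁, e₂, e₃⟩ := IsCharRoot.abs_sub_lt ((min_le_right _ _).trans_lt (by norm_num))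
      ha₀ haδ hb₀.le hb₁ h₁ h₂ h₃ h₂₃ h₃₁
    have hδε : min ε (1 / 4) ≤ ε := min_le_left _ _
    exact ⟨e₁.trans_le hδε, e₂.trans_le hδε, e₃.trans_le hδε⟩
  refine ⟨?_, ?_, ?_⟩ <;>
    refine Metric.tendsto_nhds.mpr fun ε hε => (hloc ε hε).mono fun i hi => ?_
  · simpa only [Real.dist_eq] using hi.1
  · simpa only [Real.dist_eq, sub_neg_eq_add] using hi.2.1
  · simpa only [Real.dist_eq, sub_zero] using hi.2.2

theorem tendsto_sub_one_div_mul_of_isCharRoot {a b l : ι → ℝ} (ha : Tendsto a L (𝓝 0))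
    (hl : Tendsto l L (𝓝 1)) (hroot : ∀ᶠ i in L, IsCharRoot (a i) (b i) (l i))
    (hab : ∀ᶠ i in L, a i * b i ≠ 0) :
    Tendsto (fun i => (l i - 1) / (a i * b i)) L (𝓝 (1 / 2)) := by
  have hlim : Tendsto (fun i => ((l i - a i) * (l i + 1))⁻¹) L (𝓝 ((1 - 0) * (1 + 1))⁻¹) :=
    ((hl.sub ha).mul (hl.add_const 1)).inv₀ (by norm_num)
  rw [show ((1 - 0) * (1 + 1) : ℝ)⁻¹ = 1 / 2 by norm_num] at hlim
  refine hlim.congr' ?_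
  filter_upwards [hroot, hab] with i hi hi' using (hi.sub_one_div_mul hi').symm

theorem tendsto_add_one_div_mul_of_isCharRoot {a b l : ι → ℝ} (ha : Tendsto a L (𝓝 0))
    (hl : Tendsto l L (𝓝 (-1))) (hroot : ∀ᶠ i in L, IsCharRoot (a i) (b i) (l i))
    (hab : ∀ᶠ i in L, a i * b i ≠ 0) :
    Tendsto (fun i => (l i + 1) / (a i * b i)) L (𝓝 (1 / 2)) := by
  have hlim : Tendsto (fun i => ((l i - a i) * (l i - 1))⁻¹) L (𝓝 ((-1 - 0) * (-1 - 1))⁻¹) :=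
    ((hl.sub ha).mul (hl.sub_const 1)).inv₀ (by norm_num)
  rw [show ((-1 - 0) * (-1 - 1) : ℝ)⁻¹ = 1 / 2 by norm_num] at hlim
  refine hlim.congr' ?_
  filter_upwards [hroot, hab] with i hi hi' using (hi.add_one_div_mul hi').symm

theorem tendsto_sub_add_mul_div_of_isCharRoot {a b l : ι → ℝ} (hb : Tendsto b L (𝓝 0))
    (hl : Tendsto l L (𝓝 0)) (hroot : ∀ᶠ i in L, IsCharRoot (a i) (b i) (l i))
    (ha₀ : ∀ᶠ i in L, a i ≠ 0) (hb₀ : ∀ᶠ i in L, b i ≠ 0) :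
    Tendsto (fun i => (l i - a i + a i * b i) / (a i ^ 3 * b i)) L (𝓝 (-1)) := by
  have hsq : Tendsto (fun i => l i ^ 2 - 1) L (𝓝 (0 ^ 2 - 1)) := (hl.pow 2).sub_const 1
  rw [show (0 ^ 2 - 1 : ℝ) = -1 by norm_num] at hsq
  have hdiv : Tendsto (fun i => l i / a i) L (𝓝 1) := by
    have hlim : Tendsto (fun i => 1 + b i / (l i ^ 2 - 1)) L (𝓝 (1 + 0 / -1)) :=
      tendsto_const_nhds.add (hb.div hsq (by norm_num))
    rw [zero_div, add_zero] at hlim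
    refine hlim.congr' ?_
    filter_upwards [hroot, ha₀, hb₀] with i hi ha hb using (hi.div_eq_one_add ha hb).symm
  have hlim : Tendsto (fun i => (l i / a i) ^ 2 / (l i ^ 2 - 1)) L (𝓝 (1 ^ 2 / -1)) :=
    (hdiv.pow 2).div hsq (by norm_num)
  rw [show (1 ^ 2 / -1 : ℝ) = -1 by norm_num] at hlim
  refine hlim.congr' ?_
  filter_upwards [hroot, ha₀, hb₀] with i hi ha hb using (hi.sub_add_mul_div ha hb).symm

end Asymptotics

theorem tendsto_exp_neg_mul_atTop_nhdsGT {c : ℝ} (hc : 0 < c) :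
    Tendsto (fun x => Real.exp (-(x * c))) atTop (𝓝[>] 0) :=
  Real.tendsto_exp_atBot_nhdsGT.comp (tendsto_neg_atTop_atBot.comp (tendsto_id.atTop_mul_const hc))

theorem tendsto_aOf_atTop {μh J : ℝ} (hμh : 0 < μh + J) :
    Tendsto (fun β => aOf β μh J) atTop (𝓝[>] 0) := by
  simpa only [aOf, mul_div_assoc] using tendsto_exp_neg_mul_atTop_nhdsGT (half_pos hμh)

theorem tendsto_bOf_atTop {J : ℝ} (hJ : 0 < J) : Tendsto (fun β => bOf β J) atTop (𝓝[>] 0) :=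
  tendsto_exp_neg_mul_atTop_nhdsGT hJ

/-- **Proposition A.2, second part (eigenvalue asymptotics of the transfer
matrix).** Fix `J > 0` and `μ_h` with `μ_h + J > 0`. Let
`λ₁(β) > λ₃(β) > λ₂(β)` be the three (distinct, real) eigenvalues of `T`.
Then as `β → ∞`: `λ₁ = 1 + (ab/2)(1+o(1))`, `λ₂ = −1 + (ab/2)(1+o(1))` and
`λ₃ = a − ab − a³b·(1+o(1))`. -/
theorem eigenvalue_asymptotics (J μh : ℝ) (hJ : 0 < J) (hμh : 0 < μh + J)
    (lam₁ lam₂ lam₃ : ℝ → ℝ)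
    (hroots : ∀ β : ℝ, 0 < β →
      IsCharRoot (aOf β μh J) (bOf β J) (lam₁ β) ∧
      IsCharRoot (aOf β μh J) (bOf β J) (lam₂ β) ∧
      IsCharRoot (aOf β μh J) (bOf β J) (lam₃ β) ∧
      lam₂ β < lam₃ β ∧ lam₃ β < lam₁ β) :
    Tendsto (fun β => (lam₁ β - 1) / (aOf β μh J * bOf β J)) atTop
        (nhds (1 / 2)) ∧
    Tendsto (fun β => (lam₂ β + 1) / (aOf β μh J * bOf β J)) atTop
        (nhds (1 / 2)) ∧
    Tendsto
        (fun β => (lam₃ β - aOf β μh J + aOf β μh J * bOf β J) /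
          (aOf β μh J ^ 3 * bOf β J)) atTop (nhds (-1)) := by
  have ha := tendsto_aOf_atTop hμh
  have hb := tendsto_bOf_atTop hJ
  have hroots' := (eventually_gt_atTop 0).mono hroots
  obtain ⟨hlim₁, hlim₂, hlim₃⟩ := tendsto_charRoots ha hb hroots'
  have ha₀ : ∀ᶠ β in atTop, aOf β μh J ≠ 0 := .of_forall fun _ => Real.exp_ne_zero _
  have hb₀ : ∀ᶠ β in atTop, bOf β J ≠ 0 := .of_forall fun _ => Real.exp_ne_zero _
  have hab₀ := ha₀.and hb₀ |>.mono fun _ h => mul_ne_zero h.1 h.2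
  exact ⟨tendsto_sub_one_div_mul_of_isCharRoot (tendsto_nhds_of_tendsto_nhdsWithin ha) hlim₁
      (hroots'.mono fun _ h => h.1) hab₀,
    tendsto_add_one_div_mul_of_isCharRoot (tendsto_nhds_of_tendsto_nhdsWithin ha) hlim₂
      (hroots'.mono fun _ h => h.2.1) hab₀,
    tendsto_sub_add_mul_div_of_isCharRoot (tendsto_nhds_of_tendsto_nhdsWithin hb) hlim₃
      (hroots'.mono fun _ h => h.2.2.1) ha₀ hb₀⟩
end
end
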